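/- There exist absolute constants C, C' > 0 such that the following holds. Let X be a countable data domain and A : X^n → Y an (ε,δ)-differentially private algorithm with ε ∈ (0, 1/2] and δ ∈ (0, ε). Then for β = e^{−ε²n} + C'·n·√(δ/ε), the β-approximate max-information of A over product distributions satisfies I^β_{∞,P}(A, n) ≤ C·( ε²·n + n·√(δ/ε) ). -/

import Mathlib

open scoped ENNReal

/-- The probability that a sample from the probability mass function `μ` lands in `S`. -/
noncomputable def prob {α : Type*} (μ : PMF α) (S : Set α) : ℝ :=
  (μ.toOuterMeasure S).toReal

/-- The independent coupling of two distributions: a pair whose components are independent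
with the given marginal distributions. -/
noncomputable def indepPair {α β : Type*} (p : PMF α) (q : PMF β) : PMF (α × β) :=
  p.bind fun a => q.map fun b => (a, b)

/-- `MaxInfoLe μ b k` : the `b`-approximate max-information of the joint distribution `μ`
is at most `k` (measured in bits):  for every event `O` with `Pr[(X,Z) ∈ O] > b`,
`Pr[(X,Z) ∈ O] - b ≤ 2^k · Pr[X ⊗ Z ∈ O]`. -/
def MaxInfoLe {α β : Type*} (μ : PMF (α × β)) (b k : ℝ) : Prop :=
  ∀ O : Set (α × β), b < prob μ O →
    prob μ O - b ≤ 2 ^ k * prob (indepPair (μ.map Prod.fst) (μ.map Prod.snd)) O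

/-- The `n`-fold product (i.i.d.) distribution `P^n` on datasets of size `n`. -/
noncomputable def iidPMF {X : Type*} (P : PMF X) : (n : ℕ) → PMF (Fin n → X)
  | 0 => PMF.pure (fun i => i.elim0)
  | n + 1 => P.bind fun a => (iidPMF P n).map fun x => Fin.cons a x

/-- The joint distribution of `(X, A(X))` where `X ∼ μ` and `A` is a randomized algorithm. -/
noncomputable def jointPMF {D Y : Type*} (μ : PMF D) (A : D → PMF Y) : PMF (D × Y) :=
  μ.bind fun x => (A x).map fun y => (x, y)
/-- Two datasets are neighboring if they differ in at most one entry. -/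
def Neighbor {X : Type*} {n : ℕ} (x x' : Fin n → X) : Prop :=
  ∃ i : Fin n, ∀ j : Fin n, j ≠ i → x j = x' j

/-- `(ε,δ)`-differential privacy of a randomized algorithm `A` on datasets of size `n`. -/
def DiffPrivate {X Y : Type*} {n : ℕ} (A : (Fin n → X) → PMF Y) (ε δ : ℝ) : Prop :=
  ∀ x x' : Fin n → X, Neighbor x x' → ∀ O : Set Y,
    prob (A x) O ≤ Real.exp ε * prob (A x') O + δ

/-!
Let `ν` be the law of `A(X)` for `X ∼ Pⁿ` and reveal the entries of `X` one at a time. Fixing the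
first entry to `a` gives an output law `ν_a`; `ν` is the `P`-mixture of the `ν_a`, and privacy makes
each `ν_a` `(ε, δ)`-indistinguishable from `ν`. So off a "bad" set of mass at most `7δ/ε` (under
both `ν` and `ν_a`) the ratio `ν_a(y) / ν(y)` lies in `[e^{-2ε}, e^{2ε}]`, where
`q_a² + q² ≤ (e^{2ε} + e^{-2ε}) q_a q`. Averaging over `a` shows that the second moment of the
likelihood `A(x)(y)` grows by a factor `e^{2ε} + e^{-2ε} - 1 ≤ e^{8ε²}` per revealed entry, provided
each step is discounted by `(1 + w(y))⁻¹`, `w(y)` being the probability that the step is bad at `y`.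
Chebyshev then makes `{A(x)(y) > T ν(y)}` small on the runs that avoid bad steps and have total
discount at most `n √(δ/ε)`; the other runs have mass `O(n √(δ/ε))` by a union bound and Markov.
On the rest of `O` we have `A(x)(y) ≤ T ν(y)`, which is the comparison with `X ⊗ A(X)`.
-/

namespace PMF

variable {α β : Type*}

noncomputable def expect (p : PMF α) (f : α → ℝ≥0∞) : ℝ≥0∞ := ∑' a, p a * f a

theorem expect_bind (p : PMF α) (q : α → PMF β) (f : β → ℝ≥0∞) :
    (p.bind q).expect f = p.expect fun a => (q a).expect f := by
  simp only [expect, bind_apply, ← ENNReal.tsum_mul_right, ← ENNReal.tsum_mul_left, mul_assoc]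
  exact ENNReal.tsum_comm

theorem expect_pure (a : α) (f : α → ℝ≥0∞) : (pure a).expect f = f a := by
  rw [expect, tsum_eq_single a fun b hb => by simp [pure_apply_of_ne _ _ hb], pure_apply_self,
    one_mul]

theorem expect_map (p : PMF α) (g : α → β) (f : β → ℝ≥0∞) :
    (p.map g).expect f = p.expect (f ∘ g) := by
  rw [← bind_pure_comp, expect_bind]
  simp only [Function.comp_apply, expect_pure]
  rfl

theorem expect_mono (p : PMF α) {f g : α → ℝ≥0∞} (h : ∀ a, f a ≤ g a) :
    p.expect f ≤ p.expect g :=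
  ENNReal.tsum_le_tsum fun a => mul_le_mul_right (h a) _

theorem expect_add (p : PMF α) (f g : α → ℝ≥0∞) :
    p.expect (fun a => f a + g a) = p.expect f + p.expect g := by
  simp only [expect, mul_add, ENNReal.tsum_add]

theorem expect_const_mul (p : PMF α) (c : ℝ≥0∞) (f : α → ℝ≥0∞) :
    p.expect (fun a => c * f a) = c * p.expect f := by
  simp only [expect, ← ENNReal.tsum_mul_left, mul_left_comm]

theorem expect_mul_const (p : PMF α) (c : ℝ≥0∞) (f : α → ℝ≥0∞) :
    p.expect (fun a => f a * c) = p.expect f * c := by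
  simp only [expect, ← ENNReal.tsum_mul_right, mul_assoc]

theorem expect_const (p : PMF α) (c : ℝ≥0∞) : p.expect (fun _ => c) = c := by
  rw [expect, ENNReal.tsum_mul_right, tsum_coe, one_mul]

theorem expect_comm (p : PMF α) (q : PMF β) (f : α → β → ℝ≥0∞) :
    (p.expect fun a => q.expect (f a)) = q.expect fun b => p.expect fun a => f a b := by
  simp only [expect, ← ENNReal.tsum_mul_left, mul_left_comm (p _)]
  exact ENNReal.tsum_comm

theorem expect_indicator (p : PMF α) (s : Set α) :
    p.expect (s.indicator 1) = p.toOuterMeasure s := by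
  rw [expect, toOuterMeasure_apply]
  refine tsum_congr fun a => ?_
  by_cases ha : a ∈ s <;> simp [ha]

theorem toOuterMeasure_le_expect (p : PMF α) {s : Set α} {f : α → ℝ≥0∞}
    (h : ∀ a ∈ s, 1 ≤ f a) : p.toOuterMeasure s ≤ p.expect f := by
  rw [← expect_indicator]
  refine p.expect_mono fun a => ?_
  by_cases ha : a ∈ s
  · simpa [ha] using h a ha
  · simp [ha]

theorem toOuterMeasure_le_mul_of_forall_le (p q : PMF α) {s : Set α} {c : ℝ≥0∞}
    (h : ∀ a ∈ s, p a ≤ c * q a) : p.toOuterMeasure s ≤ c * q.toOuterMeasure s := by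
  rw [toOuterMeasure_apply, toOuterMeasure_apply, ← ENNReal.tsum_mul_left]
  refine ENNReal.tsum_le_tsum fun a => ?_
  by_cases ha : a ∈ s
  · simpa [ha] using h a ha
  · simp [ha]

theorem toOuterMeasure_le_one (p : PMF α) (s : Set α) : p.toOuterMeasure s ≤ 1 :=
  (MeasureTheory.measure_mono (Set.subset_univ s)).trans_eq
    ((toOuterMeasure_apply_eq_one_iff _ _).2 (Set.subset_univ _))

theorem toOuterMeasure_ne_top (p : PMF α) (s : Set α) : p.toOuterMeasure s ≠ ⊤ :=
  ne_top_of_le_ne_top ENNReal.one_ne_top (p.toOuterMeasure_le_one s)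

theorem toOuterMeasure_bind_eq_expect (p : PMF α) (f : α → PMF β) (s : Set β) :
    (p.bind f).toOuterMeasure s = p.expect fun a => (f a).toOuterMeasure s :=
  toOuterMeasure_bind_apply p f s

theorem toOuterMeasure_lt_le_inv_mul_expect (p : PMF α) (f : α → ℝ≥0∞)
    (c : ℝ≥0∞) : p.toOuterMeasure {a | c < f a} ≤ c⁻¹ * p.expect f := by
  rw [← p.expect_const_mul]
  refine p.toOuterMeasure_le_expect fun a (ha : c < f a) => ?_
  rw [← ENNReal.div_eq_inv_mul,
    ENNReal.le_div_iff_mul_le (Or.inr (pos_of_gt ha).ne') (Or.inl ha.ne_top), one_mul]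
  exact ha.le

theorem expect_expect_eq_tsum (p : PMF α) (A : α → PMF β) (f : α → β → ℝ≥0∞) :
    (p.expect fun x => (A x).expect (f x)) = ∑' y, p.expect fun x => A x y * f x y := by
  simp only [expect, ← ENNReal.tsum_mul_left]
  rw [ENNReal.tsum_comm]

end PMF

section Elementary

theorem Real.exp_neg_le_one_sub_half {ε : ℝ} (hε0 : 0 ≤ ε) (hε : ε ≤ 1 / 2) :
    Real.exp (-ε) ≤ 1 - ε / 2 := by
  have h := (abs_le.1 (Real.abs_exp_sub_one_sub_id_le (x := -ε)
    (by rw [abs_neg, abs_of_nonneg hε0]; linarith))).2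
  nlinarith

theorem Real.exp_le_two {ε : ℝ} (hε : ε ≤ 1 / 2) : Real.exp ε ≤ 2 := by
  have h := (abs_le.1 (Real.abs_exp_sub_one_sub_id_le (x := 1 / 2) (by norm_num))).2
  linarith [Real.exp_le_exp.2 hε]

theorem ENNReal.ofReal_exp_mul_ofReal_exp (a b : ℝ) :
    ENNReal.ofReal (Real.exp a) * ENNReal.ofReal (Real.exp b) =
      ENNReal.ofReal (Real.exp (a + b)) := by
  rw [← ENNReal.ofReal_mul (Real.exp_nonneg a), Real.exp_add]

theorem ENNReal.le_of_le_exp_neg_mul_add {q : ℝ≥0∞} {ε δ : ℝ} (hq : q ≠ ⊤) (hε0 : 0 < ε)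
    (hε : ε ≤ 1 / 2) (hδ : 0 ≤ δ)
    (h : q ≤ ENNReal.ofReal (Real.exp (-ε)) * q + ENNReal.ofReal δ) :
    q ≤ ENNReal.ofReal (2 * δ / ε) := by
  rw [← ENNReal.ofReal_toReal hq, ← ENNReal.ofReal_mul (Real.exp_nonneg _),
    ← ENNReal.ofReal_add (by positivity) hδ] at h
  rw [← ENNReal.ofReal_toReal hq]
  refine ENNReal.ofReal_le_ofReal ?_
  have hreal := (ENNReal.ofReal_le_ofReal_iff (by positivity)).1 h
  have hexp := Real.exp_neg_le_one_sub_half hε0.le hε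
  rw [le_div_iff₀ hε0]
  nlinarith [ENNReal.toReal_nonneg (a := q)]

theorem Real.exp_add_exp_neg_sub_one_le {x : ℝ} (hx : |x| ≤ 1) :
    Real.exp x + Real.exp (-x) - 1 ≤ Real.exp (2 * x ^ 2) := by
  have h₁ := (abs_le.1 (Real.abs_exp_sub_one_sub_id_le hx)).2
  have h₂ := (abs_le.1 (Real.abs_exp_sub_one_sub_id_le (x := -x) (by rwa [abs_neg]))).2
  linarith [Real.add_one_le_exp (2 * x ^ 2)]

theorem ENNReal.sq_add_sq_le_of_le_mul {a b : ℝ≥0∞} {M : ℝ} (ha : a ≠ ⊤) (hb : b ≠ ⊤)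
    (hM : 0 < M) (hab : a ≤ ENNReal.ofReal M * b) (hba : b ≤ ENNReal.ofReal M * a) :
    a ^ 2 + b ^ 2 ≤ ENNReal.ofReal (M + M⁻¹) * (a * b) := by
  lift a to NNReal using ha
  lift b to NNReal using hb
  simp only [← ENNReal.ofReal_coe_nnreal] at *
  rw [← ENNReal.ofReal_mul hM.le, ENNReal.ofReal_le_ofReal_iff (by positivity)] at hab hba
  rw [← ENNReal.ofReal_pow (by positivity), ← ENNReal.ofReal_pow (by positivity),
    ← ENNReal.ofReal_add (by positivity) (by positivity), ← ENNReal.ofReal_mul (by positivity),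
    ← ENNReal.ofReal_mul (by positivity)]
  refine ENNReal.ofReal_le_ofReal ?_
  have hprod := mul_nonneg (sub_nonneg.2 hab) (sub_nonneg.2 hba)
  rw [← mul_le_mul_iff_of_pos_left hM]
  field_simp
  nlinarith

theorem ENNReal.inv_ofReal_mul_natCast_mul_sq_le (n : ℕ) {c r : ℝ} (hc : 0 ≤ c) (hr : 0 ≤ r) :
    (ENNReal.ofReal (n * r))⁻¹ * (n * ENNReal.ofReal (c * r ^ 2)) ≤
      ENNReal.ofReal (c * (n * r)) := by
  rcases (mul_nonneg n.cast_nonneg hr).eq_or_lt with h | h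
  · rcases mul_eq_zero.1 h.symm with hn | hr
    · simp [Nat.cast_eq_zero.1 hn]
    · simp [hr]
  have hn : (1 : ℝ) ≤ n := by
    rcases Nat.eq_zero_or_pos n with hn | hn
    · simp [hn] at h
    · exact_mod_cast hn
  rw [← ENNReal.ofReal_natCast, ← ENNReal.ofReal_mul n.cast_nonneg,
    ← ENNReal.ofReal_inv_of_pos h, ← ENNReal.ofReal_mul (by positivity)]
  refine ENNReal.ofReal_le_ofReal ?_
  have : (n * r)⁻¹ * (n * (c * r ^ 2)) = c * r := by field_simp
  rw [this]
  nlinarith [mul_nonneg hc hr]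

theorem ENNReal.ofReal_exp_mul_inv_mul_pow_le {ε : ℝ} (n : ℕ) (θ : ℝ) (hε : |ε| ≤ 1 / 2) :
    ENNReal.ofReal (Real.exp θ) * (ENNReal.ofReal (Real.exp (9 * (ε ^ 2 * n) + θ)))⁻¹ *
        ENNReal.ofReal (Real.exp (2 * ε) + Real.exp (-(2 * ε)) - 1) ^ n ≤
      ENNReal.ofReal (Real.exp (-(ε ^ 2 * n))) := by
  have hK := Real.exp_add_exp_neg_sub_one_le (x := 2 * ε) (by rw [abs_mul]; norm_num; linarith)
  calc _ ≤ ENNReal.ofReal (Real.exp θ) * ENNReal.ofReal (Real.exp (-(9 * (ε ^ 2 * n) + θ))) *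
        ENNReal.ofReal (Real.exp (2 * (2 * ε) ^ 2)) ^ n := by
        rw [Real.exp_neg (9 * (ε ^ 2 * n) + θ), ENNReal.ofReal_inv_of_pos (Real.exp_pos _)]
        gcongr
    _ = _ := by
        rw [← ENNReal.ofReal_pow (Real.exp_nonneg _), ← Real.exp_nat_mul,
          ENNReal.ofReal_exp_mul_ofReal_exp, ENNReal.ofReal_exp_mul_ofReal_exp]
        ring_nf

end Elementary

section JointAndProduct

variable {D X Y : Type*}

theorem jointPMF_map_fst (p : PMF D) (A : D → PMF Y) : (jointPMF p A).map Prod.fst = p := by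
  simp only [jointPMF, PMF.map_bind, PMF.map_comp]
  exact (congrArg p.bind (funext fun x => PMF.map_const (A x) x)).trans p.bind_pure

theorem jointPMF_map_snd (p : PMF D) (A : D → PMF Y) :
    (jointPMF p A).map Prod.snd = p.bind A := by
  simp only [jointPMF, PMF.map_bind, PMF.map_comp]
  exact congrArg p.bind (funext fun x => PMF.map_id (A x))

theorem expect_jointPMF (p : PMF D) (A : D → PMF Y) (f : D × Y → ℝ≥0∞) :
    (jointPMF p A).expect f = p.expect fun x => (A x).expect fun y => f (x, y) := by
  simp only [jointPMF, PMF.expect_bind, PMF.expect_map]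
  rfl

theorem toOuterMeasure_jointPMF (p : PMF D) (A : D → PMF Y) (S : Set (D × Y)) :
    (jointPMF p A).toOuterMeasure S =
      p.expect fun x => (A x).toOuterMeasure {y | (x, y) ∈ S} := by
  simp only [jointPMF, PMF.toOuterMeasure_bind_eq_expect, PMF.toOuterMeasure_map_apply]
  rfl

theorem expect_iidPMF_succ (P : PMF X) (n : ℕ) (f : (Fin (n + 1) → X) → ℝ≥0∞) :
    (iidPMF P (n + 1)).expect f =
      P.expect fun a => (iidPMF P n).expect fun t => f (Fin.cons a t) := by
  simp only [iidPMF, PMF.expect_bind, PMF.expect_map]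
  rfl

end JointAndProduct

section Privacy

variable {X Y : Type*}

def IndistLE (μ ν : PMF Y) (ε δ : ℝ) : Prop :=
  ∀ S : Set Y, μ.toOuterMeasure S ≤
    ENNReal.ofReal (Real.exp ε) * ν.toOuterMeasure S + ENNReal.ofReal δ

theorem IndistLE.bind {α : Type*} {ε δ : ℝ} (p : PMF α) {f g : α → PMF Y}
    (h : ∀ a, IndistLE (f a) (g a) ε δ) : IndistLE (p.bind f) (p.bind g) ε δ := fun S => by
  simp only [PMF.toOuterMeasure_bind_eq_expect]
  calc p.expect (fun a => (f a).toOuterMeasure S)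
      ≤ p.expect (fun a => ENNReal.ofReal (Real.exp ε) * (g a).toOuterMeasure S
          + ENNReal.ofReal δ) := p.expect_mono fun a => h a S
    _ = _ := by rw [p.expect_add, p.expect_const_mul, p.expect_const]

theorem DiffPrivate.indistLE {n : ℕ} {A : (Fin n → X) → PMF Y} {ε δ : ℝ}
    (hA : DiffPrivate A ε δ) (hδ : 0 ≤ δ) {x x' : Fin n → X} (hx : Neighbor x x') :
    IndistLE (A x) (A x') ε δ := fun S => by
  have h := ENNReal.ofReal_le_ofReal (hA x x' hx S)
  rwa [ENNReal.ofReal_add (by unfold prob; positivity) hδ,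
    ENNReal.ofReal_mul (Real.exp_nonneg ε), prob, prob,
    ENNReal.ofReal_toReal (PMF.toOuterMeasure_ne_top _ _),
    ENNReal.ofReal_toReal (PMF.toOuterMeasure_ne_top _ _)] at h

theorem neighbor_cons_cons_left {n : ℕ} (a a' : X) (t : Fin n → X) :
    Neighbor (Fin.cons a t : Fin (n + 1) → X) (Fin.cons a' t) :=
  ⟨0, fun j hj => by
    obtain ⟨k, rfl⟩ := Fin.exists_succ_eq.2 hj
    simp⟩

theorem Neighbor.cons {n : ℕ} (a : X) {t t' : Fin n → X} (h : Neighbor t t') :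
    Neighbor (Fin.cons a t : Fin (n + 1) → X) (Fin.cons a t') := by
  obtain ⟨i, hi⟩ := h
  refine ⟨i.succ, Fin.cases (by simp) fun k hk => ?_⟩
  simpa using hi k (fun h => hk (h ▸ rfl))

end Privacy

section RatioBounds

variable {Y : Type*} {μ ν : PMF Y} {ε δ : ℝ}

theorem IndistLE.toOuterMeasure_ratio_gt_le (h : IndistLE μ ν ε δ) (hε0 : 0 < ε)
    (hε : ε ≤ 1 / 2) (hδ : 0 ≤ δ) :
    μ.toOuterMeasure {y | ENNReal.ofReal (Real.exp (2 * ε)) * ν y < μ y} ≤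
      ENNReal.ofReal (2 * δ / ε) := by
  set S := {y | ENNReal.ofReal (Real.exp (2 * ε)) * ν y < μ y}
  have hν : ν.toOuterMeasure S ≤
      ENNReal.ofReal (Real.exp (-(2 * ε))) * μ.toOuterMeasure S := by
    refine PMF.toOuterMeasure_le_mul_of_forall_le ν μ fun y hy => ?_
    calc ν y = ENNReal.ofReal (Real.exp (-(2 * ε))) *
          (ENNReal.ofReal (Real.exp (2 * ε)) * ν y) := by
          rw [← mul_assoc, ENNReal.ofReal_exp_mul_ofReal_exp]; simp
      _ ≤ _ := mul_le_mul_right (le_of_lt hy) _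
  refine ENNReal.le_of_le_exp_neg_mul_add (PMF.toOuterMeasure_ne_top _ _) hε0 hε hδ ?_
  calc μ.toOuterMeasure S
      ≤ ENNReal.ofReal (Real.exp ε) * ν.toOuterMeasure S + ENNReal.ofReal δ := h S
    _ ≤ ENNReal.ofReal (Real.exp ε) * (ENNReal.ofReal (Real.exp (-(2 * ε))) *
          μ.toOuterMeasure S) + ENNReal.ofReal δ := by gcongr
    _ = ENNReal.ofReal (Real.exp (-ε)) * μ.toOuterMeasure S + ENNReal.ofReal δ := by
        rw [← mul_assoc, ENNReal.ofReal_exp_mul_ofReal_exp]; ring_nf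

def ratioOutside (μ ν : PMF Y) (c : ℝ≥0∞) : Set Y :=
  {y | c * ν y < μ y ∨ c * μ y < ν y}

theorem ratioOutside_comm (μ ν : PMF Y) (c : ℝ≥0∞) :
    ratioOutside μ ν c = ratioOutside ν μ c :=
  Set.ext fun _ => or_comm

theorem toOuterMeasure_ratioOutside_le (hμν : IndistLE μ ν ε δ) (hνμ : IndistLE ν μ ε δ)
    (hε0 : 0 < ε) (hε : ε ≤ 1 / 2) (hδ : 0 ≤ δ) :
    μ.toOuterMeasure (ratioOutside μ ν (ENNReal.ofReal (Real.exp (2 * ε)))) ≤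
      ENNReal.ofReal (7 * δ / ε) := by
  rw [ratioOutside, Set.ofPred_or]
  refine (MeasureTheory.measure_union_le _ _).trans ?_
  calc _ ≤ ENNReal.ofReal (2 * δ / ε) +
          (ENNReal.ofReal (Real.exp ε) * ENNReal.ofReal (2 * δ / ε) + ENNReal.ofReal δ) :=
        add_le_add (hμν.toOuterMeasure_ratio_gt_le hε0 hε hδ)
          ((hμν _).trans (by gcongr; exact hνμ.toOuterMeasure_ratio_gt_le hε0 hε hδ))
    _ = ENNReal.ofReal (2 * δ / ε + (Real.exp ε * (2 * δ / ε) + δ)) := by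
        rw [ENNReal.ofReal_add (by positivity) (by positivity),
          ENNReal.ofReal_add (by positivity) hδ, ENNReal.ofReal_mul (Real.exp_nonneg ε)]
    _ ≤ ENNReal.ofReal (7 * δ / ε) := by
        refine ENNReal.ofReal_le_ofReal ?_
        have hδε : δ ≤ δ / ε := le_div_self hδ hε0 (by linarith)
        have h2 : Real.exp ε * (2 * δ / ε) ≤ 2 * (2 * δ / ε) :=
          mul_le_mul_of_nonneg_right (Real.exp_le_two hε) (by positivity)
        have : 7 * δ / ε = 7 * (δ / ε) := by ring
        have : 2 * δ / ε = 2 * (δ / ε) := by ring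
        linarith

end RatioBounds

section SecondMoment

variable {α Y : Type*}

theorem expect_indicator_compl_mul_sq_le (p : PMF α) (μ : α → PMF Y) {M : ℝ} (hM : 0 < M)
    (y : Y) :
    p.expect (fun a =>
        (ratioOutside (μ a) (p.bind μ) (ENNReal.ofReal M))ᶜ.indicator 1 y * μ a y ^ 2) ≤
      (ENNReal.ofReal (M + M⁻¹ - 1) +
        p.expect fun a => (ratioOutside (μ a) (p.bind μ) (ENNReal.ofReal M)).indicator 1 y) *
        p.bind μ y ^ 2 := by
  set ν := p.bind μ
  set bad := fun a => ratioOutside (μ a) ν (ENNReal.ofReal M)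
  have hν : ν y ≠ ⊤ := ν.apply_ne_top y
  have per_a : ∀ a, (bad a)ᶜ.indicator 1 y * μ a y ^ 2 + ν y ^ 2 ≤
      ENNReal.ofReal (M + M⁻¹) * ν y * μ a y + (bad a).indicator 1 y * ν y ^ 2 := by
    intro a
    by_cases ha : y ∈ bad a
    · simp [ha]
    · obtain ⟨h₁, h₂⟩ := not_or.1 ha
      have := ENNReal.sq_add_sq_le_of_le_mul ((μ a).apply_ne_top y) hν hM (not_lt.1 h₁)
        (not_lt.1 h₂)
      simp only [Set.indicator_of_mem (Set.mem_compl ha), Set.indicator_of_notMem ha]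
      calc _ = μ a y ^ 2 + ν y ^ 2 := by simp
        _ ≤ _ := by rw [mul_assoc, mul_comm (ν y)]; simpa using this
  have hsum := p.expect_mono per_a
  rw [p.expect_add, p.expect_const, p.expect_add, p.expect_const_mul, p.expect_mul_const,
    show (p.expect fun a => μ a y) = ν y from rfl] at hsum
  have hK : ENNReal.ofReal (M + M⁻¹) = ENNReal.ofReal (M + M⁻¹ - 1) + 1 := by
    have : 1 ≤ M + M⁻¹ := by
      nlinarith [inv_pos.2 hM, mul_inv_cancel₀ hM.ne', sq_nonneg (M - 1)]
    rw [← ENNReal.ofReal_one, ← ENNReal.ofReal_add (by linarith) zero_le_one]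
    ring_nf
  rw [hK] at hsum
  refine (ENNReal.add_le_add_iff_right (ENNReal.pow_ne_top hν)).1 (hsum.trans_eq ?_)
  ring

end SecondMoment

section Marginal

variable {X Y : Type*}

noncomputable def marginal (P : PMF X) {n : ℕ} (B : (Fin n → X) → PMF Y) : PMF Y :=
  (iidPMF P n).bind B

def fixHead {n : ℕ} (B : (Fin (n + 1) → X) → PMF Y) (a : X) : (Fin n → X) → PMF Y :=
  fun t => B (Fin.cons a t)

theorem marginal_succ (P : PMF X) {n : ℕ} (B : (Fin (n + 1) → X) → PMF Y) :
    marginal P B = P.bind fun a => marginal P (fixHead B a) := by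
  simp only [marginal, iidPMF, PMF.bind_bind, PMF.bind_map]
  rfl

theorem expect_iidPMF_expect (P : PMF X) {n : ℕ} (B : (Fin n → X) → PMF Y)
    (f : Y → ℝ≥0∞) :
    ((iidPMF P n).expect fun x => (B x).expect f) = (marginal P B).expect f :=
  (PMF.expect_bind _ _ _).symm

theorem expect_iidPMF_toOuterMeasure (P : PMF X) {n : ℕ} (B : (Fin n → X) → PMF Y)
    (S : Set Y) :
    ((iidPMF P n).expect fun x => (B x).toOuterMeasure S) = (marginal P B).toOuterMeasure S :=
  (PMF.toOuterMeasure_bind_eq_expect _ _ _).symm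

variable {P : PMF X} {ε δ : ℝ} {n : ℕ} {B : (Fin (n + 1) → X) → PMF Y}

theorem diffPrivate_fixHead (hB : DiffPrivate B ε δ) (a : X) : DiffPrivate (fixHead B a) ε δ :=
  fun _ _ ht => hB _ _ (ht.cons a)

theorem DiffPrivate.indistLE_fixHead_fixHead (hB : DiffPrivate B ε δ) (hδ : 0 ≤ δ)
    (a a' : X) :
    IndistLE (marginal P (fixHead B a)) (marginal P (fixHead B a')) ε δ :=
  IndistLE.bind _ fun t => hB.indistLE hδ (neighbor_cons_cons_left a a' t)

theorem DiffPrivate.indistLE_fixHead_marginal (hB : DiffPrivate B ε δ) (hδ : 0 ≤ δ) (a : X) :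
    IndistLE (marginal P (fixHead B a)) (marginal P B) ε δ := by
  rw [marginal_succ P B, ← P.bind_const (marginal P (fixHead B a))]
  exact IndistLE.bind P fun a' => hB.indistLE_fixHead_fixHead hδ a a'

theorem DiffPrivate.indistLE_marginal_fixHead (hB : DiffPrivate B ε δ) (hδ : 0 ≤ δ) (a : X) :
    IndistLE (marginal P B) (marginal P (fixHead B a)) ε δ := by
  rw [marginal_succ P B, ← P.bind_const (marginal P (fixHead B a))]
  exact IndistLE.bind P fun a' => hB.indistLE_fixHead_fixHead hδ a' a

end Marginal

section Chain

variable {X Y : Type*} (P : PMF X) (ε : ℝ)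

def stepBad {n : ℕ} (B : (Fin (n + 1) → X) → PMF Y) (a : X) : Set Y :=
  ratioOutside (marginal P (fixHead B a)) (marginal P B) (ENNReal.ofReal (Real.exp (2 * ε)))

noncomputable def stepWeight {n : ℕ} (B : (Fin (n + 1) → X) → PMF Y) (y : Y) : ℝ≥0∞ :=
  P.expect fun a => (stepBad P ε B a).indicator 1 y

def goodSet : {n : ℕ} → ((Fin n → X) → PMF Y) → (Fin n → X) → Set Y
  | 0, _, _ => Set.univ
  | _ + 1, B, x => (stepBad P ε B (x 0))ᶜ ∩ goodSet (fixHead B (x 0)) (Fin.tail x)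

noncomputable def totalWeight :
    {n : ℕ} → ((Fin n → X) → PMF Y) → (Fin n → X) → Y → ℝ≥0∞
  | 0, _, _, _ => 0
  | _ + 1, B, x, y => stepWeight P ε B y + totalWeight (fixHead B (x 0)) (Fin.tail x) y

noncomputable def penalty :
    {n : ℕ} → ((Fin n → X) → PMF Y) → (Fin n → X) → Y → ℝ≥0∞
  | 0, _, _, _ => 1
  | _ + 1, B, x, y => (1 + stepWeight P ε B y)⁻¹ * penalty (fixHead B (x 0)) (Fin.tail x) y

variable {n : ℕ} (B : (Fin (n + 1) → X) → PMF Y) (a : X) (t : Fin n → X) (y : Y)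

@[simp]
theorem goodSet_cons :
    goodSet P ε B (Fin.cons a t) = (stepBad P ε B a)ᶜ ∩ goodSet P ε (fixHead B a) t := rfl

@[simp]
theorem totalWeight_cons :
    totalWeight P ε B (Fin.cons a t) y =
      stepWeight P ε B y + totalWeight P ε (fixHead B a) t y :=
  rfl

@[simp]
theorem penalty_cons :
    penalty P ε B (Fin.cons a t) y =
      (1 + stepWeight P ε B y)⁻¹ * penalty P ε (fixHead B a) t y :=
  rfl

end Chain

section ChainBounds

variable {X Y : Type*} (P : PMF X) (ε : ℝ)

theorem stepWeight_le_one {n : ℕ} (B : (Fin (n + 1) → X) → PMF Y) (y : Y) :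
    stepWeight P ε B y ≤ 1 :=
  (P.expect_mono fun _ => Set.indicator_le_self' (fun _ _ => zero_le_one) y).trans_eq
    (P.expect_const 1)

theorem totalWeight_ne_top {n : ℕ} (B : (Fin n → X) → PMF Y) (x : Fin n → X) (y : Y) :
    totalWeight P ε B x y ≠ ⊤ := by
  induction n with
  | zero => simp [totalWeight]
  | succ n ih =>
    rw [← Fin.cons_self_tail x, totalWeight_cons]
    exact ENNReal.add_ne_top.2 ⟨ne_top_of_le_ne_top ENNReal.one_ne_top
      (stepWeight_le_one P ε B y), ih _ _⟩

theorem one_le_exp_totalWeight_mul_penalty {n : ℕ} (B : (Fin n → X) → PMF Y) (x : Fin n → X)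
    (y : Y) :
    1 ≤ ENNReal.ofReal (Real.exp (totalWeight P ε B x y).toReal) * penalty P ε B x y := by
  induction n with
  | zero => simp [totalWeight, penalty]
  | succ n ih =>
    rw [← Fin.cons_self_tail x, totalWeight_cons, penalty_cons]
    set w := stepWeight P ε B y
    have hw : w ≠ ⊤ := ne_top_of_le_ne_top ENNReal.one_ne_top (stepWeight_le_one P ε B y)
    have h1w : 1 + w ≤ ENNReal.ofReal (Real.exp w.toReal) := by
      rw [← ENNReal.ofReal_toReal hw, ENNReal.toReal_ofReal ENNReal.toReal_nonneg, add_comm,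
        ← ENNReal.ofReal_one, ← ENNReal.ofReal_add ENNReal.toReal_nonneg zero_le_one]
      exact ENNReal.ofReal_le_ofReal (Real.add_one_le_exp _)
    rw [ENNReal.toReal_add hw (totalWeight_ne_top P ε _ _ y), Real.exp_add,
      ENNReal.ofReal_mul (Real.exp_nonneg _)]
    calc (1 : ℝ≥0∞) = (1 + w) * (1 + w)⁻¹ * 1 := by
          rw [ENNReal.mul_inv_cancel (by simp) (by simpa using hw), mul_one]
      _ ≤ ENNReal.ofReal (Real.exp w.toReal) * (1 + w)⁻¹ *
          (ENNReal.ofReal (Real.exp (totalWeight P ε (fixHead B (x 0)) (Fin.tail x) y).toReal) *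
            penalty P ε (fixHead B (x 0)) (Fin.tail x) y) := by gcongr; exact ih _ _
      _ = _ := by ring

theorem expect_goodSet_penalty_sq_le {n : ℕ} (B : (Fin n → X) → PMF Y) (y : Y) :
    (iidPMF P n).expect (fun x => (goodSet P ε B x).indicator 1 y * penalty P ε B x y * B x y ^ 2)
      ≤ ENNReal.ofReal (Real.exp (2 * ε) + Real.exp (-(2 * ε)) - 1) ^ n *
          marginal P B y ^ 2 := by
  induction n with
  | zero => simp [goodSet, penalty, marginal, iidPMF, PMF.expect_pure]
  | succ n ih =>
    set K := ENNReal.ofReal (Real.exp (2 * ε) + Real.exp (-(2 * ε)) - 1)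
    set w := stepWeight P ε B y
    set μ := fun a => marginal P (fixHead B a)
    have hK : 1 ≤ K := by
      rw [ENNReal.one_le_ofReal]
      linarith [Real.add_one_le_exp (2 * ε), Real.add_one_le_exp (-(2 * ε))]
    have hstep := expect_indicator_compl_mul_sq_le P μ (Real.exp_pos (2 * ε)) y
    rw [← marginal_succ, ← Real.exp_neg] at hstep
    rw [expect_iidPMF_succ]
    calc _ = P.expect fun a => (1 + w)⁻¹ * ((stepBad P ε B a)ᶜ.indicator 1 y *
          (iidPMF P n).expect fun t => (goodSet P ε (fixHead B a) t).indicator 1 y *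
            penalty P ε (fixHead B a) t y * fixHead B a t y ^ 2) := by
          congr 1; ext a
          rw [← PMF.expect_const_mul, ← PMF.expect_const_mul]
          congr 1; ext t
          simp only [goodSet_cons, penalty_cons, Set.inter_indicator_one, Pi.mul_apply, fixHead, w]
          ring
      _ ≤ P.expect fun a =>
            (1 + w)⁻¹ * ((stepBad P ε B a)ᶜ.indicator 1 y * (K ^ n * μ a y ^ 2)) :=
          P.expect_mono fun a => by gcongr; exact ih _
      _ = (1 + w)⁻¹ * K ^ n *
            P.expect (fun a => (stepBad P ε B a)ᶜ.indicator 1 y * μ a y ^ 2) := by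
          rw [mul_assoc, ← P.expect_const_mul, ← P.expect_const_mul]
          congr 1; ext a; ring
      _ ≤ (1 + w)⁻¹ * K ^ n * ((K + w) * marginal P B y ^ 2) := by gcongr; exact hstep
      _ ≤ (1 + w)⁻¹ * K ^ n * (K * (1 + w) * marginal P B y ^ 2) := by
          gcongr
          rw [mul_add, mul_one]
          exact add_le_add_right (le_mul_of_one_le_left zero_le hK) _
      _ = K ^ (n + 1) * marginal P B y ^ 2 * ((1 + w)⁻¹ * (1 + w)) := by ring
      _ = K ^ (n + 1) * marginal P B y ^ 2 := by
          rw [ENNReal.inv_mul_cancel (by simp) (ENNReal.add_ne_top.2 ⟨ENNReal.one_ne_top,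
            ne_top_of_le_ne_top ENNReal.one_ne_top (stepWeight_le_one P ε B y)⟩), mul_one]

end ChainBounds

section PrivacyBounds

variable {X Y : Type*} {P : PMF X} {ε δ : ℝ}

theorem DiffPrivate.toOuterMeasure_fixHead_stepBad_le {n : ℕ} {B : (Fin (n + 1) → X) → PMF Y}
    (hB : DiffPrivate B ε δ) (hε0 : 0 < ε) (hε : ε ≤ 1 / 2) (hδ : 0 ≤ δ) (a : X) :
    (marginal P (fixHead B a)).toOuterMeasure (stepBad P ε B a) ≤ ENNReal.ofReal (7 * δ / ε) :=
  toOuterMeasure_ratioOutside_le (hB.indistLE_fixHead_marginal hδ a)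
    (hB.indistLE_marginal_fixHead hδ a) hε0 hε hδ

theorem DiffPrivate.expect_stepWeight_le {n : ℕ} {B : (Fin (n + 1) → X) → PMF Y}
    (hB : DiffPrivate B ε δ) (hε0 : 0 < ε) (hε : ε ≤ 1 / 2) (hδ : 0 ≤ δ) :
    (marginal P B).expect (fun y => stepWeight P ε B y) ≤ ENNReal.ofReal (7 * δ / ε) := by
  simp only [stepWeight]
  rw [← PMF.expect_comm]
  simp only [PMF.expect_indicator]
  refine (P.expect_mono fun a => ?_).trans_eq (P.expect_const _)
  rw [stepBad, ratioOutside_comm]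
  exact toOuterMeasure_ratioOutside_le (hB.indistLE_marginal_fixHead hδ a)
    (hB.indistLE_fixHead_marginal hδ a) hε0 hε hδ

theorem DiffPrivate.expect_compl_goodSet_le {n : ℕ} {B : (Fin n → X) → PMF Y}
    (hB : DiffPrivate B ε δ) (hε0 : 0 < ε) (hε : ε ≤ 1 / 2) (hδ : 0 ≤ δ) :
    (iidPMF P n).expect (fun x => (B x).toOuterMeasure (goodSet P ε B x)ᶜ) ≤
      n * ENNReal.ofReal (7 * δ / ε) := by
  induction n with
  | zero => simp [goodSet, iidPMF, PMF.expect_pure]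
  | succ n ih =>
    rw [expect_iidPMF_succ]
    calc _ ≤ P.expect fun a => (iidPMF P n).expect fun t =>
          (fixHead B a t).toOuterMeasure (stepBad P ε B a) +
            (fixHead B a t).toOuterMeasure (goodSet P ε (fixHead B a) t)ᶜ :=
          P.expect_mono fun a => (iidPMF P n).expect_mono fun t => by
            rw [goodSet_cons, Set.compl_inter, compl_compl]
            exact MeasureTheory.measure_union_le _ _
      _ = P.expect fun a => (marginal P (fixHead B a)).toOuterMeasure (stepBad P ε B a) +
            (iidPMF P n).expect fun t =>
              (fixHead B a t).toOuterMeasure (goodSet P ε (fixHead B a) t)ᶜ := by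
          simp only [PMF.expect_add, expect_iidPMF_toOuterMeasure]
      _ ≤ P.expect fun _ => ENNReal.ofReal (7 * δ / ε) + n * ENNReal.ofReal (7 * δ / ε) :=
          P.expect_mono fun a => add_le_add (hB.toOuterMeasure_fixHead_stepBad_le hε0 hε hδ a)
            (ih (diffPrivate_fixHead hB a))
      _ = (n + 1 : ℕ) * ENNReal.ofReal (7 * δ / ε) := by
          rw [P.expect_const]; push_cast; ring

theorem DiffPrivate.expect_totalWeight_le {n : ℕ} {B : (Fin n → X) → PMF Y}
    (hB : DiffPrivate B ε δ) (hε0 : 0 < ε) (hε : ε ≤ 1 / 2) (hδ : 0 ≤ δ) :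
    (iidPMF P n).expect (fun x => (B x).expect fun y => totalWeight P ε B x y) ≤
      n * ENNReal.ofReal (7 * δ / ε) := by
  induction n with
  | zero => simp [totalWeight, iidPMF, PMF.expect_const]
  | succ n ih =>
    rw [expect_iidPMF_succ]
    calc _ = (P.expect fun a => (marginal P (fixHead B a)).expect fun y => stepWeight P ε B y) +
          P.expect fun a => (iidPMF P n).expect fun t =>
            (fixHead B a t).expect fun y => totalWeight P ε (fixHead B a) t y := by
          simp only [totalWeight_cons, PMF.expect_add, expect_iidPMF_expect]
          rfl
      _ ≤ ENNReal.ofReal (7 * δ / ε) + P.expect fun _ => n * ENNReal.ofReal (7 * δ / ε) := by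
          rw [← PMF.expect_bind, ← marginal_succ]
          exact add_le_add (hB.expect_stepWeight_le hε0 hε hδ)
            (P.expect_mono fun a => ih (diffPrivate_fixHead hB a))
      _ = (n + 1 : ℕ) * ENNReal.ofReal (7 * δ / ε) := by
          rw [P.expect_const]; push_cast; ring

end PrivacyBounds

section FourTerms

variable {X Y : Type*}

theorem toOuterMeasure_jointPMF_le_mul_indepPair {D : Type*} (p : PMF D) (A : D → PMF Y)
    (q : PMF Y) (c : ℝ≥0∞) (O : Set (D × Y)) :
    (jointPMF p A).toOuterMeasure (O ∩ {z | A z.1 z.2 ≤ c * q z.2}) ≤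
      c * (indepPair p q).toOuterMeasure O := by
  rw [indepPair, ← jointPMF, toOuterMeasure_jointPMF, toOuterMeasure_jointPMF,
    ← PMF.expect_const_mul]
  refine p.expect_mono fun x => ?_
  calc _ ≤ c * q.toOuterMeasure {y | (x, y) ∈ O ∩ {z | A z.1 z.2 ≤ c * q z.2}} :=
        PMF.toOuterMeasure_le_mul_of_forall_le _ _ fun y hy => hy.2
    _ ≤ _ := by gcongr; exact fun y hy => hy.1

variable (P : PMF X) (ε : ℝ) {n : ℕ} (A : (Fin n → X) → PMF Y)

theorem tsum_inv_mul_expect_goodSet_le {T : ℝ≥0∞} (hT : T ≠ ⊤) :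
    ∑' y, (T * marginal P A y)⁻¹ * (iidPMF P n).expect (fun x =>
        (goodSet P ε A x).indicator 1 y * penalty P ε A x y * A x y ^ 2) ≤
      T⁻¹ * ENNReal.ofReal (Real.exp (2 * ε) + Real.exp (-(2 * ε)) - 1) ^ n := by
  set ν := marginal P A
  set K := ENNReal.ofReal (Real.exp (2 * ε) + Real.exp (-(2 * ε)) - 1)
  calc _ ≤ ∑' y, T⁻¹ * K ^ n * ν y := by
        refine ENNReal.tsum_le_tsum fun y => ?_
        have hν : (ν y)⁻¹ * ν y ^ 2 ≤ ν y := by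
          by_cases h0 : ν y = 0
          · simp [h0]
          · rw [sq, ← mul_assoc, ENNReal.inv_mul_cancel h0 (ν.apply_ne_top y), one_mul]
        calc _ ≤ (T * ν y)⁻¹ * (K ^ n * ν y ^ 2) := by
              gcongr; exact expect_goodSet_penalty_sq_le P ε A y
          _ = T⁻¹ * K ^ n * ((ν y)⁻¹ * ν y ^ 2) := by
              rw [ENNReal.mul_inv (Or.inr (ν.apply_ne_top y)) (Or.inl hT)]; ring
          _ ≤ _ := by gcongr
    _ = _ := by rw [ENNReal.tsum_mul_left, ν.tsum_coe, mul_one]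

theorem toOuterMeasure_jointPMF_goodSet_le {θ : ℝ} (hθ : 0 ≤ θ) {T : ℝ≥0∞} (hT : T ≠ ⊤) :
    (jointPMF (iidPMF P n) A).toOuterMeasure {z | z.2 ∈ goodSet P ε A z.1 ∧
        totalWeight P ε A z.1 z.2 ≤ ENNReal.ofReal θ ∧ T * marginal P A z.2 < A z.1 z.2} ≤
      ENNReal.ofReal (Real.exp θ) * T⁻¹ *
        ENNReal.ofReal (Real.exp (2 * ε) + Real.exp (-(2 * ε)) - 1) ^ n := by
  set ν := marginal P A
  set K := ENNReal.ofReal (Real.exp (2 * ε) + Real.exp (-(2 * ε)) - 1)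
  set c := ENNReal.ofReal (Real.exp θ)
  set g : (Fin n → X) → Y → ℝ≥0∞ := fun x y =>
    (goodSet P ε A x).indicator 1 y * penalty P ε A x y * A x y
  have hcover : ∀ z ∈ {z : (Fin n → X) × Y | z.2 ∈ goodSet P ε A z.1 ∧
      totalWeight P ε A z.1 z.2 ≤ ENNReal.ofReal θ ∧ T * ν z.2 < A z.1 z.2},
      1 ≤ c * (T * ν z.2)⁻¹ * g z.1 z.2 := by
    rintro ⟨x, y⟩ ⟨hgood, hW, hbig⟩
    have hpen : 1 ≤ c * penalty P ε A x y :=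
      (one_le_exp_totalWeight_mul_penalty P ε A x y).trans (by
        gcongr
        exact ENNReal.ofReal_le_ofReal (Real.exp_le_exp.2 (ENNReal.toReal_le_of_le_ofReal hθ hW)))
    have hratio : 1 ≤ (T * ν y)⁻¹ * A x y := by
      rw [← ENNReal.div_eq_inv_mul, ENNReal.le_div_iff_mul_le (Or.inr (pos_of_gt hbig).ne')
        (Or.inl hbig.ne_top), one_mul]
      exact hbig.le
    calc (1 : ℝ≥0∞) = 1 * 1 := (one_mul 1).symm
      _ ≤ c * penalty P ε A x y * ((T * ν y)⁻¹ * A x y) := mul_le_mul' hpen hratio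
      _ = _ := by simp only [g, Set.indicator_of_mem hgood, Pi.one_apply]; ring
  refine ((jointPMF (iidPMF P n) A).toOuterMeasure_le_expect hcover).trans ?_
  rw [expect_jointPMF, PMF.expect_expect_eq_tsum]
  calc _ = c * ∑' y, (T * ν y)⁻¹ * (iidPMF P n).expect fun x =>
        (goodSet P ε A x).indicator 1 y * penalty P ε A x y * A x y ^ 2 := by
        rw [← ENNReal.tsum_mul_left]
        refine tsum_congr fun y => ?_
        rw [← PMF.expect_const_mul, ← PMF.expect_const_mul]
        congr 1; ext x; simp only [g]; ring
    _ ≤ c * (T⁻¹ * K ^ n) := by gcongr; exact tsum_inv_mul_expect_goodSet_le P ε A hT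
    _ = _ := (mul_assoc _ _ _).symm

variable {P ε A} {δ : ℝ}

theorem DiffPrivate.toOuterMeasure_jointPMF_le (hA : DiffPrivate A ε δ) (hε0 : 0 < ε)
    (hε : ε ≤ 1 / 2) (hδ : 0 ≤ δ) {θ : ℝ} (hθ : 0 ≤ θ) (T : ℝ)
    (O : Set ((Fin n → X) × Y)) :
    (jointPMF (iidPMF P n) A).toOuterMeasure O ≤
      ENNReal.ofReal T * (indepPair (iidPMF P n) (marginal P A)).toOuterMeasure O +
        (n * ENNReal.ofReal (7 * δ / ε) +
          (ENNReal.ofReal θ)⁻¹ * (n * ENNReal.ofReal (7 * δ / ε)) +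
          ENNReal.ofReal (Real.exp θ) * (ENNReal.ofReal T)⁻¹ *
            ENNReal.ofReal (Real.exp (2 * ε) + Real.exp (-(2 * ε)) - 1) ^ n) := by
  set μ := jointPMF (iidPMF P n) A
  set T' := ENNReal.ofReal T
  set W := fun z : (Fin n → X) × Y => totalWeight P ε A z.1 z.2
  have hcover : O ⊆ (O ∩ {z | A z.1 z.2 ≤ T' * marginal P A z.2}) ∪
      {z | z.2 ∉ goodSet P ε A z.1} ∪ {z | ENNReal.ofReal θ < W z} ∪
      {z | z.2 ∈ goodSet P ε A z.1 ∧ W z ≤ ENNReal.ofReal θ ∧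
        T' * marginal P A z.2 < A z.1 z.2} := by
    intro z hz
    simp only [Set.mem_union, Set.mem_inter_iff, Set.mem_ofPred_eq]
    rcases le_or_gt (A z.1 z.2) (T' * marginal P A z.2) with h₁ | h₁ <;>
      rcases le_or_gt (W z) (ENNReal.ofReal θ) with h₂ | h₂ <;> tauto
  have hbad :
      μ.toOuterMeasure {z | z.2 ∉ goodSet P ε A z.1} ≤ n * ENNReal.ofReal (7 * δ / ε) :=
    (toOuterMeasure_jointPMF _ _ _).trans_le (hA.expect_compl_goodSet_le hε0 hε hδ)
  have hheavy : μ.toOuterMeasure {z | ENNReal.ofReal θ < W z} ≤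
      (ENNReal.ofReal θ)⁻¹ * (n * ENNReal.ofReal (7 * δ / ε)) := by
    refine (μ.toOuterMeasure_lt_le_inv_mul_expect W _).trans ?_
    rw [expect_jointPMF]
    exact mul_le_mul_right (hA.expect_totalWeight_le hε0 hε hδ) _
  calc μ.toOuterMeasure O ≤ _ := MeasureTheory.measure_mono hcover
    _ ≤ _ := MeasureTheory.measure_union_le _ _
    _ ≤ _ := add_le_add_left (MeasureTheory.measure_union_le _ _) _
    _ ≤ _ := add_le_add_left (add_le_add_left (MeasureTheory.measure_union_le _ _) _) _
    _ ≤ _ := add_le_add (add_le_add (add_le_add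
          (toOuterMeasure_jointPMF_le_mul_indepPair _ _ _ _ O) hbad) hheavy)
          (toOuterMeasure_jointPMF_goodSet_le P ε A hθ ENNReal.ofReal_ne_top)
    _ = _ := by ring

end FourTerms

section Assembly

variable {X Y : Type*} {P : PMF X} {ε δ : ℝ} {n : ℕ} {A : (Fin n → X) → PMF Y}

theorem DiffPrivate.toOuterMeasure_jointPMF_le_exp (hA : DiffPrivate A ε δ) (hε0 : 0 < ε)
    (hε : ε ≤ 1 / 2) (hδ : 0 ≤ δ) (hδε : δ ≤ ε) (O : Set ((Fin n → X) × Y)) :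
    (jointPMF (iidPMF P n) A).toOuterMeasure O ≤
      ENNReal.ofReal (Real.exp (9 * (ε ^ 2 * n) + n * Real.sqrt (δ / ε))) *
        (indepPair (iidPMF P n) (marginal P A)).toOuterMeasure O +
      ENNReal.ofReal (Real.exp (-(ε ^ 2 * n)) + 14 * n * Real.sqrt (δ / ε)) := by
  set r := Real.sqrt (δ / ε)
  have hr0 : 0 ≤ r := Real.sqrt_nonneg _
  have hr1 : r ≤ 1 := Real.sqrt_le_one.2 ((div_le_one hε0).2 hδε)
  have hδr : 7 * δ / ε = 7 * r ^ 2 := by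
    rw [Real.sq_sqrt (div_nonneg hδ hε0.le)]; ring
  refine (hA.toOuterMeasure_jointPMF_le hε0 hε hδ (by positivity : 0 ≤ n * r)
    (Real.exp (9 * (ε ^ 2 * n) + n * r)) O).trans ?_
  gcongr
  rw [hδr]
  have hmass : (n : ℝ≥0∞) * ENNReal.ofReal (7 * r ^ 2) ≤ ENNReal.ofReal (7 * (n * r)) := by
    rw [← ENNReal.ofReal_natCast, ← ENNReal.ofReal_mul n.cast_nonneg]
    exact ENNReal.ofReal_le_ofReal (by nlinarith [mul_nonneg n.cast_nonneg hr0])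
  have hmarkov := ENNReal.inv_ofReal_mul_natCast_mul_sq_le n (by norm_num : (0 : ℝ) ≤ 7) hr0
  have hsecond := ENNReal.ofReal_exp_mul_inv_mul_pow_le (ε := ε) n (n * r)
    (by rw [abs_of_pos hε0]; exact hε)
  calc _ ≤ ENNReal.ofReal (7 * (n * r)) + ENNReal.ofReal (7 * (n * r)) +
        ENNReal.ofReal (Real.exp (-(ε ^ 2 * n))) :=
        add_le_add (add_le_add hmass hmarkov) hsecond
    _ = _ := by
        rw [← ENNReal.ofReal_add (by positivity) (by positivity),
          ← ENNReal.ofReal_add (by positivity) (by positivity)]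
        ring_nf

end Assembly

theorem maxInfoLe_of_toOuterMeasure_le {α β : Type*} (μ : PMF (α × β)) {b k : ℝ}
    (hb : 0 ≤ b)
    (h : ∀ O, μ.toOuterMeasure O ≤ ENNReal.ofReal (2 ^ k) *
      (indepPair (μ.map Prod.fst) (μ.map Prod.snd)).toOuterMeasure O + ENNReal.ofReal b) :
    MaxInfoLe μ b k := by
  intro O _
  have hfin : ENNReal.ofReal (2 ^ k) *
      (indepPair (μ.map Prod.fst) (μ.map Prod.snd)).toOuterMeasure O ≠ ⊤ :=
    ENNReal.mul_ne_top ENNReal.ofReal_ne_top (PMF.toOuterMeasure_ne_top _ _)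
  have h' := ENNReal.toReal_mono (ENNReal.add_ne_top.2 ⟨hfin, ENNReal.ofReal_ne_top⟩) (h O)
  rw [ENNReal.toReal_add hfin ENNReal.ofReal_ne_top, ENNReal.toReal_mul,
    ENNReal.toReal_ofReal (by positivity), ENNReal.toReal_ofReal hb] at h'
  unfold prob
  linarith

/-- **Main Theorem.**  There exist absolute constants `C, C' > 0` such that: for
every countable data domain `X` and every `(ε,δ)`-differentially private algorithm
`A : X^n → Y` with `ε ∈ (0,1/2]` and `δ ∈ (0,ε)`, the `β`-approximate max-information of `A`
over product distributions satisfies `I^β_{∞,P}(A, n) ≤ C·(ε²·n + n·√(δ/ε))` for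
`β = e^{-ε²n} + C'·n·√(δ/ε)`. -/
theorem stmt_5 : ∃ C C' : ℝ, 0 < C ∧ 0 < C' ∧
    ∀ (X Y : Type) [Countable X] (n : ℕ) (A : (Fin n → X) → PMF Y) (ε δ : ℝ),
      0 < ε → ε ≤ 1 / 2 → 0 < δ → δ < ε → DiffPrivate A ε δ →
      ∀ P : PMF X,
        MaxInfoLe (jointPMF (iidPMF P n) A)
          (Real.exp (-(ε ^ 2 * n)) + C' * n * Real.sqrt (δ / ε))
          (C * (ε ^ 2 * n + n * Real.sqrt (δ / ε))) := by
  refine ⟨13, 14, by norm_num, by norm_num, ?_⟩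
  intro X Y _ n A ε δ hε0 hε hδ hδε hA P
  refine maxInfoLe_of_toOuterMeasure_le _ (by positivity) fun O => ?_
  rw [jointPMF_map_fst, jointPMF_map_snd, ← marginal]
  refine (hA.toOuterMeasure_jointPMF_le_exp hε0 hε hδ.le hδε.le O).trans ?_
  gcongr
  rw [Real.rpow_def_of_pos two_pos]
  refine Real.exp_le_exp.2 ?_
  -- `C = 13` works because `13 log 2 > 9`.
  nlinarith [Real.log_two_gt_d9, mul_nonneg (sq_nonneg ε) n.cast_nonneg,
    mul_nonneg n.cast_nonneg (Real.sqrt_nonneg (δ / ε))]
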